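/- arXiv:1412.3693 — 4 statements merged into one kernel-verified Lean document; each statement's English description precedes it below -/
import Mathlib

section
/- Let k ≥ 2, n = 4k, and let H ≤ Sym_n be the regular Cayley representation of Q_{4k} (with t = (1,...,2k)(2k+1,...,4k) and the identification t^i ↔ i+1, t^i u ↔ i+2k+1). Let σ, τ ∈ H and let p, q be integers with 1 ≤ p ≤ n/2 − 1 and n/2 < q ≤ n−1. Then the pair (σ(p), σ(p+1)) is not equal to the pair (τ(q), τ(q+1)). -/
/-- The position in `{1, ..., 4*k}` of an element of the generalized quaternion group
`Q_{4k}`, under the identification `t^i ↔ i+1` and `t^i * u ↔ i + 2k + 1`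
(for `0 ≤ i ≤ 2k-1`), where `t = QuaternionGroup.a 1` and `u = QuaternionGroup.xa 0`.
Note `QuaternionGroup.xa j = u * t^j = t^(-j) * u`. -/
def qpos (k : ℕ) : QuaternionGroup k → ℕ
  | .a i => i.val + 1
  | .xa i => (-i).val + 2 * k + 1

/-- The element of `Q_{4k}` at position `p ∈ {1, ..., 4*k}`. -/
def qofpos (k : ℕ) (p : ℕ) : QuaternionGroup k :=
  if p ≤ 2 * k then .a ((p - 1 : ℕ) : ZMod (2 * k))
  else .xa (-((p - 2 * k - 1 : ℕ) : ZMod (2 * k)))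

/-- The Cayley (left regular) representation of `Q_{4k}` as permutations of the
positions `{1, ..., 4*k}`: the element at position `p` is sent, by `g`, to the
position of `g * (element at position p)`. -/
def qact (k : ℕ) (g : QuaternionGroup k) (p : ℕ) : ℕ :=
  qpos k (g * qofpos k p)

lemma qpos_bounds (k : ℕ) (hk : 2 ≤ k) (x : QuaternionGroup k) :
    1 ≤ qpos k x ∧ qpos k x ≤ 4 * k := by
  haveI : NeZero (2 * k) := ⟨by omega⟩
  cases x with
  | a i => have := i.val_lt; simp only [qpos]; omega
  | xa i => have := (-i).val_lt; simp only [qpos]; omega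

/-- The generator `x_{σ(p)}` (as an element of `Fin (4*k)`, `0`-indexed) of the free
monoid, where `σ` is the permutation of `{1, ..., 4*k}` given by `g ∈ H`. -/
def qletter (k : ℕ) (hk : 2 ≤ k) (g : QuaternionGroup k) (p : ℕ) : Fin (4 * k) :=
  ⟨qact k g p - 1, by
    have h := qpos_bounds k hk (g * qofpos k p)
    simp only [qact]; omega⟩

/-- The word `x_{σ(a)} x_{σ(a+1)} ⋯ x_{σ(a+len-1)}` in the free monoid on
`x_1, ..., x_n` (letters indexed by `Fin (4*k)`, `0`-indexed). -/
def segWord (k : ℕ) (hk : 2 ≤ k) (g : QuaternionGroup k) (a len : ℕ) :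
    FreeMonoid (Fin (4 * k)) :=
  FreeMonoid.ofList ((List.range' a len).map (qletter k hk g))

/-- The word `x_1 x_2 ⋯ x_n`. -/
def baseWord (k : ℕ) : FreeMonoid (Fin (4 * k)) :=
  FreeMonoid.ofList (List.ofFn (fun m : Fin (4 * k) => m))

/-- The defining relations `x_1 ⋯ x_n = x_{σ(1)} ⋯ x_{σ(n)}`, `σ ∈ H`. -/
def qrel (k : ℕ) (hk : 2 ≤ k) (w v : FreeMonoid (Fin (4 * k))) : Prop :=
  w = baseWord k ∧ ∃ g : QuaternionGroup k, v = segWord k hk g 1 (4 * k)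

/-- The congruence on the free monoid generated by the defining relations. -/
def qcon (k : ℕ) (hk : 2 ≤ k) : Con (FreeMonoid (Fin (4 * k))) :=
  conGen (qrel k hk)

/-- The monoid `S_n(H) = ⟨a_1, ..., a_n ∣ a_1 ⋯ a_n = a_{σ(1)} ⋯ a_{σ(n)}, σ ∈ H⟩`
where `n = 4k` and `H` is the regular Cayley representation of `Q_{4k}` in `Sym_n`. -/
abbrev Smon (k : ℕ) (hk : 2 ≤ k) : Type := (qcon k hk).Quotient

lemma qpos_inj (k : ℕ) (hk : 2 ≤ k) : Function.Injective (qpos k) := by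
  haveI : NeZero (2 * k) := ⟨by omega⟩
  rintro (i | i) (j | j) hij <;> simp only [qpos] at hij
  · exact congrArg _ (ZMod.val_injective _ (by omega))
  · have := (QuaternionGroup.a i : QuaternionGroup k); exfalso
    have h1 := i.val_lt; omega
  · exfalso; have h1 := j.val_lt; omega
  · have : -i = -j := ZMod.val_injective _ (by omega)
    exact congrArg _ (neg_injective this)

theorem stmt3aux (k : ℕ) (hk : 2 ≤ k) (g h : QuaternionGroup k) (p q : ℕ)
    (hp1 : 1 ≤ p) (hp2 : p ≤ 2 * k - 1) (hq1 : 2 * k < q) (hq2 : q ≤ 4 * k - 1) :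
    ¬(qact k g p = qact k h q ∧ qact k g (p + 1) = qact k h (q + 1)) := by
  haveI : NeZero (2 * k) := ⟨by omega⟩
  rintro ⟨h1, h2⟩
  have e1 : g * qofpos k p = h * qofpos k q := qpos_inj k hk h1
  have e2 : g * qofpos k (p + 1) = h * qofpos k (q + 1) := qpos_inj k hk h2
  rw [qofpos, if_pos (by omega), qofpos, if_neg (by omega)] at e1
  rw [qofpos, if_pos (by omega), qofpos, if_neg (by omega)] at e2
  -- express qofpos (p+1) = qofpos p * a 1 and qofpos (q+1) = qofpos q * a 1
  have hp' : ((p + 1 - 1 : ℕ) : ZMod (2 * k)) = ((p - 1 : ℕ) : ZMod (2 * k)) + 1 := by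
    have : p + 1 - 1 = (p - 1) + 1 := by omega
    rw [this]; push_cast; ring
  have hq' : ((q + 1 - 2 * k - 1 : ℕ) : ZMod (2 * k))
      = ((q - 2 * k - 1 : ℕ) : ZMod (2 * k)) + 1 := by
    have : q + 1 - 2 * k - 1 = (q - 2 * k - 1) + 1 := by omega
    rw [this]; push_cast; ring
  rw [hp', hq'] at e2
  have key : h * QuaternionGroup.xa (-(((q - 2 * k - 1 : ℕ) : ZMod (2 * k)) + 1))
      = h * QuaternionGroup.xa (-((q - 2 * k - 1 : ℕ) : ZMod (2 * k)) + 1) := by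
    calc h * QuaternionGroup.xa (-(((q - 2 * k - 1 : ℕ) : ZMod (2 * k)) + 1))
        = g * QuaternionGroup.a (((p - 1 : ℕ) : ZMod (2 * k)) + 1) := e2.symm
      _ = g * QuaternionGroup.a ((p - 1 : ℕ) : ZMod (2 * k)) * QuaternionGroup.a 1 := by
          rw [mul_assoc, QuaternionGroup.a_mul_a]
      _ = h * QuaternionGroup.xa (-((q - 2 * k - 1 : ℕ) : ZMod (2 * k))) *
            QuaternionGroup.a 1 := by rw [e1]
      _ = _ := by rw [mul_assoc, QuaternionGroup.xa_mul_a]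
  have key2 := mul_left_cancel key
  have key3 : (-(((q - 2 * k - 1 : ℕ) : ZMod (2 * k)) + 1))
      = -((q - 2 * k - 1 : ℕ) : ZMod (2 * k)) + 1 := by
    injection key2
  have : ((2 : ℕ) : ZMod (2 * k)) = 0 := by push_cast; linear_combination -key3
  have hdvd : 2 * k ∣ 2 := (ZMod.natCast_eq_zero_iff 2 (2 * k)).mp this
  have := Nat.le_of_dvd (by norm_num) hdvd
  omega

/-- for `σ, τ ∈ H`, `1 ≤ p ≤ n/2 - 1` and `n/2 < q ≤ n - 1`, the pair
`(σ(p), σ(p+1))` is not equal to the pair `(τ(q), τ(q+1))`. -/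
theorem stmt3 (k : ℕ) (hk : 2 ≤ k) (g h : QuaternionGroup k) (p q : ℕ)
    (hp1 : 1 ≤ p) (hp2 : p ≤ 2 * k - 1) (hq1 : 2 * k < q) (hq2 : q ≤ 4 * k - 1) :
    ¬(qact k g p = qact k h q ∧ qact k g (p + 1) = qact k h (q + 1)) :=
  stmt3aux k hk g h p q hp1 hp2 hq1 hq2
end

section
/- Let k ≥ 2, n = 4k, and let H ≤ Sym_n be the regular Cayley representation of Q_{4k}. Let i, j be integers with 1 ≤ i < n/2 − 1 and i ≤ j ≤ n, and let σ, τ ∈ H. Suppose that for all m with 0 ≤ m ≤ j − i, we have σ(n − j + i + m) = τ(i + m). Then either j = i, or (j = n and σ = τ). -/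
section Aux

lemma castval (k : ℕ) (hk : 2 ≤ k) (s : ZMod (2*k)) : ((s.val : ℕ) : ZMod (2*k)) = s := by
  haveI : NeZero (2*k) := ⟨by omega⟩
  exact ZMod.natCast_rightInverse s

lemma cast4k (k : ℕ) : ((4*k : ℕ) : ZMod (2*k)) = 0 := by
  rw [show (4*k : ℕ) = 2*k*2 by ring, Nat.cast_mul, ZMod.natCast_self, zero_mul]

lemma val_lt' (k : ℕ) (hk : 2 ≤ k) (s : ZMod (2*k)) : s.val < 2*k := by
  haveI : NeZero (2*k) := ⟨by omega⟩; exact s.val_lt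

lemma half_ne {N X Y : ℕ} (hN : 0 < N) : X % N + 1 ≠ Y % N + N + 1 := by
  intro hxy
  have h1 : X % N < N := Nat.mod_lt _ hN
  generalize X % N = a at hxy h1
  generalize Y % N = b at hxy
  omega

lemma mod_eq_close {N A B : ℕ} (hN : 0 < N) (h : A % N = B % N) (h1 : A < B + N)
    (h2 : B < A + N) : A = B := by
  rcases le_total A B with hab | hab
  · have hd := (Nat.modEq_iff_dvd' hab).mp h
    rcases Nat.eq_zero_or_pos (B - A) with h0 | h0
    · omega
    · have := Nat.le_of_dvd h0 hd; omega
  · have hd := (Nat.modEq_iff_dvd' hab).mp h.symm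
    rcases Nat.eq_zero_or_pos (A - B) with h0 | h0
    · omega
    · have := Nat.le_of_dvd h0 hd; omega

lemma mod_succ_contra {N A B : ℕ} (hN : 3 ≤ N) (h1 : A % N = (B+1) % N)
    (h2 : (A+1) % N = B % N) : False := by
  have m1 : Nat.ModEq N A (B+1) := h1
  have m2 : Nat.ModEq N (A+1) B := h2
  have m3 : Nat.ModEq N (B+1+1) B := (m1.add_right 1).symm.trans m2
  have hd := (Nat.modEq_iff_dvd' (by omega : B ≤ B+1+1)).mp m3.symm
  rw [show B+1+1-B = 2 by omega] at hd
  have := Nat.le_of_dvd (by norm_num) hd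
  omega

lemma qact_a_lo (k : ℕ) (hk : 2 ≤ k) (s : ZMod (2*k)) (p : ℕ) (h1 : 1 ≤ p) (h2 : p ≤ 2*k) :
    qact k (.a s) p = (s.val + (p-1)) % (2*k) + 1 := by
  haveI : NeZero (2*k) := ⟨by omega⟩
  simp only [qact, qofpos]
  rw [if_pos h2, QuaternionGroup.a_mul_a]
  simp only [qpos]
  rw [ZMod.val_add, ZMod.val_natCast, Nat.mod_eq_of_lt (show p-1 < 2*k by omega)]

lemma qact_a_hi (k : ℕ) (hk : 2 ≤ k) (s : ZMod (2*k)) (p : ℕ) (h1 : 2*k < p) (h2 : p ≤ 4*k) :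
    qact k (.a s) p = (s.val + (p-2*k-1)) % (2*k) + 2*k + 1 := by
  haveI : NeZero (2*k) := ⟨by omega⟩
  simp only [qact, qofpos]
  rw [if_neg (by omega : ¬ p ≤ 2*k), QuaternionGroup.a_mul_xa]
  simp only [qpos]
  rw [show -(-((p-2*k-1 : ℕ) : ZMod (2*k)) - s) = s + ((p-2*k-1 : ℕ) : ZMod (2*k)) by ring,
    ZMod.val_add, ZMod.val_natCast, Nat.mod_eq_of_lt (show p-2*k-1 < 2*k by omega)]

lemma qact_xa_lo (k : ℕ) (hk : 2 ≤ k) (s : ZMod (2*k)) (p : ℕ) (h1 : 1 ≤ p) (h2 : p ≤ 2*k) :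
    qact k (.xa s) p = (4*k - s.val - (p-1)) % (2*k) + 2*k + 1 := by
  haveI : NeZero (2*k) := ⟨by omega⟩
  have hv := val_lt' k hk s
  simp only [qact, qofpos]
  rw [if_pos h2, QuaternionGroup.xa_mul_a]
  simp only [qpos]
  have key : ((4*k - s.val - (p-1) : ℕ) : ZMod (2*k)) = -(s + ((p-1:ℕ) : ZMod (2*k))) := by
    rw [show (4*k - s.val - (p-1) : ℕ) = 4*k - (s.val + (p-1)) by omega,
      Nat.cast_sub (show s.val + (p-1) ≤ 4*k by omega), Nat.cast_add, castval k hk s, cast4k k]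
    ring
  rw [← key, ZMod.val_natCast]

lemma qact_xa_hi (k : ℕ) (hk : 2 ≤ k) (s : ZMod (2*k)) (p : ℕ) (h1 : 2*k < p) (h2 : p ≤ 4*k) :
    qact k (.xa s) p = (5*k - s.val - (p-2*k-1)) % (2*k) + 1 := by
  haveI : NeZero (2*k) := ⟨by omega⟩
  have hv := val_lt' k hk s
  simp only [qact, qofpos]
  rw [if_neg (by omega : ¬ p ≤ 2*k), QuaternionGroup.xa_mul_xa]
  simp only [qpos]
  have key : ((5*k - s.val - (p-2*k-1) : ℕ) : ZMod (2*k))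
      = ((k : ℕ) : ZMod (2*k)) + -((p-2*k-1 : ℕ) : ZMod (2*k)) - s := by
    rw [show (5*k - s.val - (p-2*k-1) : ℕ) = k + 4*k - (s.val + (p-2*k-1)) by omega,
      Nat.cast_sub (show s.val + (p-2*k-1) ≤ k + 4*k by omega), Nat.cast_add, Nat.cast_add,
      castval k hk s, cast4k k]
    ring
  rw [← key, ZMod.val_natCast]

end Aux

/-- if `1 ≤ i < n/2 - 1`, `i ≤ j ≤ n` and `σ(n-j+i+m) = τ(i+m)` for all
`0 ≤ m ≤ j - i`, then `j = i`, or `j = n` and `σ = τ`. -/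
theorem stmt4 (k : ℕ) (hk : 2 ≤ k) (g h : QuaternionGroup k) (i j : ℕ)
    (hi1 : 1 ≤ i) (hi2 : i < 2 * k - 1) (hij : i ≤ j) (hj : j ≤ 4 * k)
    (heq : ∀ m, m ≤ j - i → qact k g (4 * k - j + i + m) = qact k h (i + m)) :
    j = i ∨ (j = 4 * k ∧ qact k g = qact k h) := by
  haveI : NeZero (2*k) := ⟨by omega⟩
  rcases Nat.eq_or_lt_of_le hij with hji | hlt
  · exact Or.inl hji.symm
  have h0 := heq 0 (Nat.zero_le _)
  simp only [Nat.add_zero] at h0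
  have h1 := heq 1 (by omega)
  have hQ1 : 1 ≤ 4*k - j + i := by omega
  cases g with
  | a s =>
    have hsv := val_lt' k hk s
    cases h with
    | a r =>
      have hrv := val_lt' k hk r
      rw [qact_a_lo k hk r i hi1 (by omega)] at h0
      by_cases hq2 : 4*k - j + i ≤ 2*k
      · by_cases hj2 : j ≤ 2*k
        · exfalso
          have hend := heq (j - i) le_rfl
          rw [show 4*k - j + i + (j-i) = 4*k by omega, show i + (j-i) = j by omega] at hend
          rw [qact_a_hi k hk s (4*k) (by omega) le_rfl,
            qact_a_lo k hk r j (by omega) hj2] at hend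
          exact half_ne (by omega) hend.symm
        · by_cases hj4 : j = 4*k
          · right
            refine ⟨hj4, ?_⟩
            rw [show 4*k - j + i = i by omega,
              qact_a_lo k hk s i hi1 (by omega)] at h0
            have E := Nat.add_right_cancel h0
            have hAB : s.val + (i-1) = r.val + (i-1) :=
              mod_eq_close (by omega) E (by omega) (by omega)
            have hsr : s = r := by
              have hv : s.val = r.val := by omega
              rw [← castval k hk s, ← castval k hk r, hv]
            rw [hsr]
          · exfalso
            have hc := heq (2*k - i) (by omega)
            rw [show 4*k - j + i + (2*k - i) = 6*k - j by omega,
              show i + (2*k - i) = 2*k by omega] at hc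
            rw [qact_a_hi k hk s (6*k - j) (by omega) (by omega),
              qact_a_lo k hk r (2*k) (by omega) le_rfl] at hc
            exact half_ne (by omega) hc.symm
      · exfalso
        rw [qact_a_hi k hk s _ (by omega) (by omega)] at h0
        exact half_ne (by omega) h0.symm
    | xa r =>
      have hrv := val_lt' k hk r
      rw [qact_xa_lo k hk r i hi1 (by omega)] at h0
      by_cases hq2 : 4*k - j + i ≤ 2*k
      · exfalso
        rw [qact_a_lo k hk s _ hQ1 hq2] at h0
        exact half_ne (by omega) h0
      · exfalso
        rw [qact_a_hi k hk s _ (by omega) (by omega)] at h0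
        rw [qact_a_hi k hk s (4*k-j+i+1) (by omega) (by omega),
          qact_xa_lo k hk r (i+1) (by omega) (by omega)] at h1
        have E0 := Nat.add_right_cancel (Nat.add_right_cancel h0)
        have E1 := Nat.add_right_cancel (Nat.add_right_cancel h1)
        rw [show 4*k - r.val - (i-1) = (4*k - r.val - i) + 1 by omega] at E0
        rw [show s.val + (4*k - j + i + 1 - 2*k - 1) = (s.val + (4*k - j + i - 2*k - 1)) + 1 by omega,
          show 4*k - r.val - (i+1-1) = 4*k - r.val - i by omega] at E1
        exact mod_succ_contra (by omega) E0 E1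
  | xa s =>
    have hsv := val_lt' k hk s
    cases h with
    | a r =>
      have hrv := val_lt' k hk r
      rw [qact_a_lo k hk r i hi1 (by omega)] at h0
      by_cases hq2 : 4*k - j + i ≤ 2*k
      · exfalso
        rw [qact_xa_lo k hk s _ hQ1 hq2] at h0
        exact half_ne (by omega) h0.symm
      · exfalso
        rw [qact_xa_hi k hk s _ (by omega) (by omega)] at h0
        rw [qact_xa_hi k hk s (4*k-j+i+1) (by omega) (by omega),
          qact_a_lo k hk r (i+1) (by omega) (by omega)] at h1
        have E0 := Nat.add_right_cancel h0
        have E1 := Nat.add_right_cancel h1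
        rw [show 5*k - s.val - (4*k-j+i-2*k-1) = (5*k - s.val - (4*k-j+i-2*k)) + 1 by omega] at E0
        rw [show 5*k - s.val - (4*k-j+i+1-2*k-1) = 5*k - s.val - (4*k-j+i-2*k) by omega,
          show r.val + (i+1-1) = (r.val + (i-1)) + 1 by omega] at E1
        exact mod_succ_contra (by omega) E0.symm E1.symm
    | xa r =>
      have hrv := val_lt' k hk r
      rw [qact_xa_lo k hk r i hi1 (by omega)] at h0
      by_cases hq2 : 4*k - j + i ≤ 2*k
      · by_cases hj2 : j ≤ 2*k
        · exfalso
          have hend := heq (j - i) le_rfl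
          rw [show 4*k - j + i + (j-i) = 4*k by omega, show i + (j-i) = j by omega] at hend
          rw [qact_xa_hi k hk s (4*k) (by omega) le_rfl,
            qact_xa_lo k hk r j (by omega) hj2] at hend
          exact half_ne (by omega) hend
        · by_cases hj4 : j = 4*k
          · right
            refine ⟨hj4, ?_⟩
            rw [show 4*k - j + i = i by omega,
              qact_xa_lo k hk s i hi1 (by omega)] at h0
            have E := Nat.add_right_cancel (Nat.add_right_cancel h0)
            have hAB : 4*k - s.val - (i-1) = 4*k - r.val - (i-1) :=
              mod_eq_close (by omega) E (by omega) (by omega)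
            have hsr : s = r := by
              have hv : s.val = r.val := by omega
              rw [← castval k hk s, ← castval k hk r, hv]
            rw [hsr]
          · exfalso
            have hc := heq (2*k - i) (by omega)
            rw [show 4*k - j + i + (2*k - i) = 6*k - j by omega,
              show i + (2*k - i) = 2*k by omega] at hc
            rw [qact_xa_hi k hk s (6*k - j) (by omega) (by omega),
              qact_xa_lo k hk r (2*k) (by omega) le_rfl] at hc
            exact half_ne (by omega) hc
      · exfalso
        rw [qact_xa_hi k hk s _ (by omega) (by omega)] at h0
        exact half_ne (by omega) h0
end

section
/- Let k ≥ 2, n = 4k, and let H ≤ Sym_n be the regular Cayley representation of Q_{4k}. Let i, j be integers with 1 ≤ i, j ≤ n/2, and let σ, τ ∈ H. Suppose σ(j + m) = τ(i + m) for all m with 0 ≤ m ≤ n/2. Then i = j and σ = τ. -/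
namespace QuaternionGroup

def IsA {n : ℕ} : QuaternionGroup n → Prop
  | .a _ => True
  | .xa _ => False

theorem isA_mul {n : ℕ} (g x : QuaternionGroup n) : IsA (g * x) ↔ (IsA g ↔ IsA x) := by
  cases g <;> cases x <;> simp [IsA]

end QuaternionGroup

open QuaternionGroup

section Positions

variable {k : ℕ}

theorem isA_qofpos (p : ℕ) : IsA (qofpos k p) ↔ p ≤ 2 * k := by
  unfold qofpos
  split_ifs with hp <;> simp [IsA, hp]

variable [NeZero k]

theorem qpos_le_iff (x : QuaternionGroup k) : qpos k x ≤ 2 * k ↔ IsA x := by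
  cases x with
  | a i => simpa [qpos, IsA] using i.val_lt
  | xa i => simp [qpos, IsA]

theorem qpos_injective : Function.Injective (qpos k) := by
  rintro (i | i) (j | j) h <;> simp only [qpos] at h
  · exact congrArg _ (ZMod.val_injective _ (by omega))
  · have := i.val_lt; omega
  · have := j.val_lt; omega
  · exact congrArg _ (neg_injective (ZMod.val_injective _ (by omega)))

theorem qact_le_iff (g : QuaternionGroup k) (p : ℕ) :
    qact k g p ≤ 2 * k ↔ (IsA g ↔ p ≤ 2 * k) := by
  rw [qact, qpos_le_iff, isA_mul, isA_qofpos]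

theorem qact_left_injective (p : ℕ) : Function.Injective fun g : QuaternionGroup k => qact k g p :=
  fun _ _ h => mul_right_cancel (qpos_injective h)

end Positions

theorem eq_of_forall_le_iff_le_iff {N i j : ℕ} {c : Prop} (hj1 : 1 ≤ j) (hj2 : j ≤ N)
    (h : ∀ m ≤ N, (j + m ≤ N ↔ i + m ≤ N) ↔ c) : i = j := by
  have at_edge := h (N - j) (by omega)
  have past_edge := h (N - j + 1) (by omega)
  by_contra hne
  rcases Nat.lt_or_gt_of_ne hne with hlt | hgt
  · simp only [show j + (N - j) ≤ N by omega, show i + (N - j) ≤ N by omega,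
      show ¬ j + (N - j + 1) ≤ N by omega, show i + (N - j + 1) ≤ N by omega] at at_edge past_edge
    tauto
  · simp only [show j + (N - j) ≤ N by omega, show ¬ i + (N - j) ≤ N by omega,
      show ¬ j + (N - j + 1) ≤ N by omega, show ¬ i + (N - j + 1) ≤ N by omega] at at_edge past_edge
    tauto

theorem stmt5_general (k : ℕ) (hk : 2 ≤ k) (g h : QuaternionGroup k) (i j : ℕ)
    (hj1 : 1 ≤ j) (hj2 : j ≤ 2 * k)
    (heq : ∀ m, m ≤ 2 * k → qact k g (j + m) = qact k h (i + m)) :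
    i = j ∧ qact k g = qact k h := by
  have : NeZero k := ⟨by omega⟩
  have hij : i = j := by
    refine eq_of_forall_le_iff_le_iff (c := IsA g ↔ IsA h) hj1 hj2 fun m hm => ?_
    have := qact_le_iff g (j + m)
    rw [heq m hm, qact_le_iff] at this
    tauto
  subst hij
  have hgh : g = h := qact_left_injective i (by simpa using heq 0 (Nat.zero_le _))
  subst hgh
  exact ⟨rfl, rfl⟩

/-- if `1 ≤ i, j ≤ n/2` and `σ(j+m) = τ(i+m)` for all `0 ≤ m ≤ n/2`,
then `i = j` and `σ = τ`. -/
theorem stmt5 (k : ℕ) (hk : 2 ≤ k) (g h : QuaternionGroup k) (i j : ℕ)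
    (hi1 : 1 ≤ i) (hi2 : i ≤ 2 * k) (hj1 : 1 ≤ j) (hj2 : j ≤ 2 * k)
    (heq : ∀ m, m ≤ 2 * k → qact k g (j + m) = qact k h (i + m)) :
    i = j ∧ qact k g = qact k h :=
  stmt5_general k hk g h i j hj1 hj2 heq
end

section
/- Let k ≥ 2, n = 4k, H the regular Cayley representation of Q_{4k} in Sym_n, and π : FM_n → S_n(H) the canonical projection from the free monoid on x_1,...,x_n. Suppose w_1 = x_{i_1}···x_{i_r} and w_2 = x_{j_1}···x_{j_r} satisfy π(w_1) = π(w_2) and i_1 ≠ j_1. Then r ≥ n, and there exist σ, τ ∈ H such that i_m = σ(m) and j_m = τ(m) for all 1 ≤ m ≤ n−1. Moreover exactly one of the following holds: (1) σ(n) = i_n and τ(n) = j_n; (2) σ(n) = i_n and τ(n) ≠ j_n; (3) σ(n) ≠ i_n and τ(n) = j_n. -/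
/-!
Write `e(p)` for the element of `Q_{4k}` at position `p`. Each relation replaces an occurrence of
a pattern `σ(1) ⋯ σ(n)`, `σ ∈ H`, by another one. In `Q_{4k}` the map `m ↦ e(m + d) e(m)⁻¹` is
never constant on a long enough interval, so an occurrence of a pattern cannot overlap another
pattern, or a long prefix of one, in two or more letters. This rigidity confines where rewrites
can act, and it keeps alive the remnants of patterns tracked below.

Since `i₁ ≠ j₁`, some rewrite on the way from `w₁` to `w₂` acts at position `1`. Before the first
one, rewrites act only to the right of the first `n - 1` letters, so these read `σ(1) ⋯ σ(n-1)`
for some `σ ∈ H`, and likewise `τ(1) ⋯ τ(n-1)` in `w₂`. If `i_n ≠ σ(n)`, a protected remnant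
starts at position `n`; the first rewrite at the front forces it to be the pattern of `σ e(n)`,
whose first letter is `σ(n)`, and its tail survives behind the new leading pattern. From then on
the word starts either with `σ(1) ⋯ σ(n-1)` again or with a full pattern other than that of `σ`.
As `w₂` does not begin with `i₁`, it begins with the full pattern of `τ`, so `j_n = τ(n)`.
-/

namespace QuaternionMonoid

open Relation

variable {k : ℕ}

lemma qpos_injective (hk : 0 < k) : Function.Injective (qpos k) := by
  have : NeZero (2 * k) := ⟨by omega⟩
  rintro (i | i) (j | j) h <;> simp only [qpos] at h
  · exact congrArg _ (ZMod.val_injective _ (by omega))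
  · have := i.val_lt; have := (-j).val_lt; omega
  · have := j.val_lt; have := (-i).val_lt; omega
  · exact congrArg _ (neg_injective (ZMod.val_injective _ (by omega)))

lemma qofpos_of_le {p : ℕ} (h : p ≤ 2 * k) :
    qofpos k p = .a ((p - 1 : ℕ) : ZMod (2 * k)) :=
  if_pos h

lemma qofpos_of_lt {p : ℕ} (h : 2 * k < p) :
    qofpos k p = .xa (-((p - 2 * k - 1 : ℕ) : ZMod (2 * k))) :=
  if_neg (by omega)

lemma qofpos_one (hk : 0 < k) : qofpos k 1 = 1 := by
  rw [qofpos_of_le (by omega), QuaternionGroup.one_def]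
  simp

lemma qpos_qofpos {p : ℕ} (h1 : 1 ≤ p) (h2 : p ≤ 4 * k) :
    qpos k (qofpos k p) = p := by
  have : NeZero (2 * k) := ⟨by omega⟩
  rcases le_or_gt p (2 * k) with hp | hp
  · rw [qofpos_of_le hp, qpos, ZMod.val_natCast_of_lt (by omega)]
    omega
  · rw [qofpos_of_lt hp, qpos, neg_neg, ZMod.val_natCast_of_lt (by omega)]
    omega

lemma qletter_val_add_one (hk : 2 ≤ k) (g : QuaternionGroup k) (p : ℕ) :
    (qletter k hk g p).val + 1 = qact k g p := by
  have := qpos_bounds k hk (g * qofpos k p)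
  simp only [qletter, qact] at *
  omega

lemma qletter_eq_qletter_iff (hk : 2 ≤ k) {f f' : QuaternionGroup k} {m m' : ℕ} :
    qletter k hk f m = qletter k hk f' m' ↔ f * qofpos k m = f' * qofpos k m' := by
  rw [← (qpos_injective (by omega)).eq_iff, Fin.ext_iff]
  have h := qletter_val_add_one hk f m
  have h' := qletter_val_add_one hk f' m'
  simp only [qact] at h h'
  omega

lemma qletter_mul_qofpos_one (hk : 2 ≤ k) (g : QuaternionGroup k) (m : ℕ) :
    qletter k hk (g * qofpos k m) 1 = qletter k hk g m := by
  rw [qletter_eq_qletter_iff, qofpos_one (by omega), mul_one]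

lemma two_ne_zero_zmod_two_mul (hk : 2 ≤ k) : (2 : ZMod (2 * k)) ≠ 0 := by
  intro h
  have h2 : ((2 : ℕ) : ZMod (2 * k)) = 0 := by exact_mod_cast h
  rw [ZMod.natCast_eq_zero_iff] at h2
  have := Nat.le_of_dvd two_pos h2
  omega

/-- With `e = qofpos k`, the map `m ↦ e(m + d) e(m)⁻¹` is not constant on `[1, R]`: for `d < 2k`
its values at `m = 1` and `m = 2k - d + 1` are of the forms `a _` and `xa _`, while for `d ≥ 2k`
its values at `m = 1, 2` are `xa i` and `xa (i - 2)`. -/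
theorem not_forall_mul_qofpos_eq_shift (hk : 2 ≤ k) (F h : QuaternionGroup k) {d R : ℕ}
    (hd : 1 ≤ d) (hR : 2 ≤ R) (hdR : 2 * k + 1 ≤ d + R) :
    ¬ ∀ m, 1 ≤ m → m ≤ R → F * qofpos k m = h * qofpos k (m + d) := by
  intro heq
  have hF := heq 1 le_rfl (by omega)
  rw [qofpos_one (by omega), mul_one] at hF
  subst hF
  rcases lt_or_ge d (2 * k) with hd' | hd'
  · have e := heq (2 * k - d + 1) (by omega) (by omega)
    rw [qofpos_of_le (p := 1 + d) (by omega), qofpos_of_le (p := 2 * k - d + 1) (by omega),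
      qofpos_of_lt (p := 2 * k - d + 1 + d) (by omega), mul_assoc, QuaternionGroup.a_mul_a] at e
    cases mul_left_cancel e
  · have e := heq 2 (by norm_num) hR
    rw [qofpos_of_le (p := 2) (by omega), qofpos_of_lt (p := 1 + d) (by omega),
      qofpos_of_lt (p := 2 + d) (by omega), mul_assoc,
      QuaternionGroup.xa_mul_a, show 2 + d - 2 * k - 1 = (1 + d - 2 * k - 1) + 1 by omega]
      at e
    have e' := QuaternionGroup.xa.inj (mul_left_cancel e)
    push_cast at e'
    exact two_ne_zero_zmod_two_mul hk (by linear_combination e')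

def pattern (hk : 2 ≤ k) (f : QuaternionGroup k) : List (Fin (4 * k)) :=
  (segWord k hk f 1 (4 * k)).toList

def HasSeg (hk : 2 ≤ k) (f : QuaternionGroup k) (s a ℓ : ℕ) (w : List (Fin (4 * k))) : Prop :=
  ∀ j < ℓ, w[s + j]? = some (qletter k hk f (a + j))

def StepAt (hk : 2 ≤ k) (p : ℕ) (w w' : List (Fin (4 * k))) : Prop :=
  ∃ (f f' : QuaternionGroup k) (u v : List (Fin (4 * k))), u.length = p ∧
    w = u ++ pattern hk f ++ v ∧ w' = u ++ pattern hk f' ++ v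

def Step (hk : 2 ≤ k) (w w' : List (Fin (4 * k))) : Prop :=
  ∃ p, StepAt hk p w w'

variable {hk : 2 ≤ k} {f f' g : QuaternionGroup k} {w w' : List (Fin (4 * k))}
  {s a ℓ p : ℕ}

@[simp] lemma length_pattern (f : QuaternionGroup k) : (pattern hk f).length = 4 * k := by
  simp [pattern, segWord]

lemma hasSeg_pattern (f : QuaternionGroup k) (u v : List (Fin (4 * k))) :
    HasSeg hk f u.length 1 (4 * k) (u ++ pattern hk f ++ v) := by
  intro j hj
  rw [List.append_assoc, List.getElem?_append_right (by omega), Nat.add_sub_cancel_left,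
    List.getElem?_append_left (by simpa using hj)]
  simp [pattern, segWord, hj]

namespace HasSeg

lemma mono (h : HasSeg hk f s a ℓ w) {ℓ' : ℕ} (hℓ : ℓ' ≤ ℓ) : HasSeg hk f s a ℓ' w :=
  fun j hj => h j (by omega)

lemma congr (h : HasSeg hk f s a ℓ w) (hw : ∀ x, s ≤ x → x < s + ℓ → w'[x]? = w[x]?) :
    HasSeg hk f s a ℓ w' := by
  intro j hj
  rw [hw (s + j) (by omega) (by omega)]
  exact h j hj

lemma tail (h : HasSeg hk f s a (ℓ + 1) w) : HasSeg hk f (s + 1) (a + 1) ℓ w := by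
  intro j hj
  rw [Nat.add_right_comm, Nat.add_right_comm a]
  simpa only [Nat.add_assoc, Nat.add_comm 1] using h (1 + j) (by omega)

lemma cons (h₀ : w[s]? = some (qletter k hk f a)) (h : HasSeg hk f (s + 1) (a + 1) ℓ w) :
    HasSeg hk f s a (ℓ + 1) w := by
  rintro (_ | j) hj
  · exact h₀
  · simpa only [Nat.add_assoc, Nat.add_comm 1] using h j (by omega)

lemma add_le_length (h : HasSeg hk f s a ℓ w) (hℓ : 0 < ℓ) : s + ℓ ≤ w.length := by
  have := (List.getElem?_eq_some_iff.mp (h (ℓ - 1) (by omega))).1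
  omega

lemma mul_qofpos_eq (h : HasSeg hk f s a ℓ w) {s' a' ℓ' : ℕ} (h' : HasSeg hk f' s' a' ℓ' w)
    {j j' : ℕ} (hj : j < ℓ) (hj' : j' < ℓ') (hx : s + j = s' + j') :
    f * qofpos k (a + j) = f' * qofpos k (a' + j') := by
  have e := h' j' hj'
  rw [← hx, h j hj] at e
  exact (qletter_eq_qletter_iff hk).mp (Option.some.inj e)

lemma eq_of_hasSeg (h : HasSeg hk f s a ℓ w) {ℓ' : ℕ} (h' : HasSeg hk f' s a ℓ' w)
    (hℓ : 0 < ℓ) (hℓ' : 0 < ℓ') : f = f' :=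
  mul_right_cancel (h.mul_qofpos_eq h' hℓ hℓ' rfl)

end HasSeg

namespace StepAt

lemma symm (h : StepAt hk p w w') : StepAt hk p w' w := by
  obtain ⟨f, f', u, v, hu, rfl, rfl⟩ := h
  exact ⟨f', f, u, v, hu, rfl, rfl⟩

lemma exists_hasSeg_left (h : StepAt hk p w w') : ∃ f, HasSeg hk f p 1 (4 * k) w := by
  obtain ⟨f, f', u, v, rfl, rfl, rfl⟩ := h
  exact ⟨f, hasSeg_pattern f u v⟩

lemma exists_hasSeg_right (h : StepAt hk p w w') : ∃ f, HasSeg hk f p 1 (4 * k) w' :=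
  h.symm.exists_hasSeg_left

lemma getElem?_of_lt (h : StepAt hk p w w') {x : ℕ} (hx : x < p) : w'[x]? = w[x]? := by
  obtain ⟨f, f', u, v, rfl, rfl, rfl⟩ := h
  rw [List.append_assoc, List.append_assoc, List.getElem?_append_left hx,
    List.getElem?_append_left hx]

lemma getElem?_of_ge (h : StepAt hk p w w') {x : ℕ} (hx : p + 4 * k ≤ x) : w'[x]? = w[x]? := by
  obtain ⟨f, f', u, v, rfl, rfl, rfl⟩ := h
  rw [List.getElem?_append_right (by simp; omega), List.getElem?_append_right (by simp; omega)]
  simp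

end StepAt

lemma HasSeg.stepAt_of_le (h : HasSeg hk f s a ℓ w) (hs : StepAt hk p w w') (hp : s + ℓ ≤ p) :
    HasSeg hk f s a ℓ w' :=
  h.congr fun _ _ hx => hs.getElem?_of_lt (by omega)

lemma HasSeg.stepAt_of_ge (h : HasSeg hk f s a ℓ w) (hs : StepAt hk p w w') (hp : p + 4 * k ≤ s) :
    HasSeg hk f s a ℓ w' :=
  h.congr fun _ hx _ => hs.getElem?_of_ge (by omega)

lemma false_of_pattern_starts_in_prefix {F : QuaternionGroup k} {q L : ℕ}
    (hF : HasSeg hk F p 1 (4 * k) w) (hf : HasSeg hk f q 1 L w)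
    (hqp : q < p) (hpL : p + 2 ≤ q + L) (hL : 2 * k + 1 ≤ L) (hL' : L ≤ 4 * k) : False := by
  refine not_forall_mul_qofpos_eq_shift hk F f (d := p - q) (R := L - (p - q))
    (by omega) (by omega) (by omega) fun m hm hm' => ?_
  convert hF.mul_qofpos_eq hf (j := m - 1) (j' := p - q + m - 1) (by omega) (by omega) (by omega)
    using 3 <;> omega

lemma false_of_prefix_starts_in_pattern {F : QuaternionGroup k} {q L : ℕ}
    (hF : HasSeg hk F p 1 (4 * k) w) (hf : HasSeg hk f q 1 L w)
    (hpq : p < q) (hq : q + 2 ≤ p + 4 * k) (hL : 2 * k + 1 ≤ q - p + L) (hL' : 2 ≤ L) :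
    False := by
  refine not_forall_mul_qofpos_eq_shift hk f F (d := q - p) (R := min L (4 * k - (q - p)))
    (by omega) (by omega) (by omega) fun m hm hm' => ?_
  convert hf.mul_qofpos_eq hF (j := m - 1) (j' := q - p + m - 1) (by omega) (by omega) (by omega)
    using 3 <;> omega

/-- Rewrites at or to the right of its root preserve a chain (`Chain.stepAt`), and its root blocks
rewrites overlapping it from the left: a chain protects a short remnant ending just before it. -/
inductive Chain (hk : 2 ≤ k) (w : List (Fin (4 * k))) : ℕ → Prop
  | full (f : QuaternionGroup k) (q : ℕ) : HasSeg hk f q 1 (4 * k) w → Chain hk w q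
  | cons (f : QuaternionGroup k) (q : ℕ) :
      HasSeg hk f q 1 (4 * k - 1) w → Chain hk w (q + (4 * k - 1)) → Chain hk w q

namespace Chain

lemma exists_hasSeg {q : ℕ} (h : Chain hk w q) : ∃ f, HasSeg hk f q 1 (4 * k - 1) w := by
  cases h with
  | full f q hf => exact ⟨f, hf.mono (by omega)⟩
  | cons f q hf _ => exact ⟨f, hf⟩

lemma congr {q : ℕ} (h : Chain hk w q) (hw : ∀ x, q ≤ x → w'[x]? = w[x]?) : Chain hk w' q := by
  induction h with
  | full f q hf => exact .full f q (hf.congr fun x hx _ => hw x hx)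
  | cons f q hf _ ih =>
    exact .cons f q (hf.congr fun x hx _ => hw x hx) (ih fun x hx => hw x (by omega))

lemma stepAt_of_ge {q : ℕ} (h : Chain hk w q) (hs : StepAt hk p w w') (hp : p + 4 * k ≤ q) :
    Chain hk w' q :=
  h.congr fun _ hx => hs.getElem?_of_ge (by omega)

lemma stepAt {q : ℕ} (h : Chain hk w q) (hs : StepAt hk p w w') (hqp : q ≤ p) :
    Chain hk w' q := by
  obtain ⟨F, hF⟩ := hs.exists_hasSeg_left
  obtain ⟨F', hF'⟩ := hs.exists_hasSeg_right
  induction h with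
  | full f q hf =>
    obtain rfl | hqp := eq_or_lt_of_le hqp
    · exact .full F' q hF'
    by_cases hp : p + 2 ≤ q + 4 * k
    · exact (false_of_pattern_starts_in_prefix hF hf hqp hp (by omega) le_rfl).elim
    obtain rfl | hp := eq_or_ne p (q + (4 * k - 1))
    · exact .cons f q ((hf.mono (by omega)).stepAt_of_le hs le_rfl) (.full F' _ hF')
    · exact .full f q (hf.stepAt_of_le hs (by omega))
  | cons f q hf hq ih =>
    obtain rfl | hqp := eq_or_lt_of_le hqp
    · exact .full F' q hF'
    by_cases hp : p + 2 ≤ q + (4 * k - 1)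
    · exact (false_of_pattern_starts_in_prefix hF hf hqp hp (by omega) (by omega)).elim
    by_cases hp' : p + 1 = q + (4 * k - 1)
    · obtain ⟨c, hc⟩ := hq.exists_hasSeg
      exact (false_of_prefix_starts_in_pattern hF hc (by omega) (by omega) (by omega)
        (by omega)).elim
    · exact .cons f q (hf.stepAt_of_le hs (by omega)) (ih (by omega))

end Chain

def Guarded (hk : 2 ≤ k) (T : ℕ) (f : QuaternionGroup k) (s a ℓ : ℕ)
    (w : List (Fin (4 * k))) : Prop :=
  HasSeg hk f s a ℓ w ∧ (T ≤ ℓ ∨ Chain hk w (s + ℓ))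

namespace Guarded

variable {T : ℕ}

lemma stepAt (h : Guarded hk T f s a ℓ w) (hs : StepAt hk p w w') (hsp : s ≤ p) :
    Guarded hk T f s a (min ℓ (p - s)) w' := by
  obtain ⟨hf, hT⟩ := h
  by_cases hp : p ≤ s + ℓ
  · obtain ⟨F', hF'⟩ := hs.exists_hasSeg_right
    rw [min_eq_right (by omega)]
    refine ⟨(hf.mono (by omega)).stepAt_of_le hs (by omega), .inr ?_⟩
    rw [Nat.add_sub_cancel' hsp]
    exact .full F' p hF'
  · rw [min_eq_left (by omega)]
    exact ⟨hf.stepAt_of_le hs (by omega), hT.imp_right fun hc => hc.stepAt hs (by omega)⟩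

lemma stepAt_of_ge (h : Guarded hk T f s a ℓ w) (hs : StepAt hk p w w') (hp : p + 4 * k ≤ s) :
    Guarded hk T f s a ℓ w' :=
  ⟨h.1.stepAt_of_ge hs hp, h.2.imp_right fun hc => hc.stepAt_of_ge hs (by omega)⟩

lemma tail (h : Guarded hk (T + 1) f s a (ℓ + 1) w) : Guarded hk T f (s + 1) (a + 1) ℓ w :=
  ⟨h.1.tail, h.2.imp (by omega) fun hc => by rwa [Nat.add_right_comm, Nat.add_assoc]⟩

lemma cons (h₀ : w[s]? = some (qletter k hk f a)) (h : Guarded hk T f (s + 1) (a + 1) ℓ w) :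
    Guarded hk (T + 1) f s a (ℓ + 1) w :=
  ⟨h.1.cons h₀, h.2.imp (by omega) fun hc => by rwa [Nat.add_right_comm, Nat.add_assoc] at hc⟩

lemma false_of_pattern_before {F : QuaternionGroup k} (hF : HasSeg hk F p 1 (4 * k) w)
    (h : Guarded hk (2 * k) f (p + 1) 1 ℓ w) : False := by
  obtain ⟨hf, hg⟩ := h
  by_cases hℓ : 2 * k ≤ ℓ
  · exact false_of_prefix_starts_in_pattern hF hf (by omega) (by omega) (by omega) (by omega)
  · obtain ⟨c, hc⟩ := (hg.resolve_left hℓ).exists_hasSeg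
    exact false_of_prefix_starts_in_pattern hF hc (by omega) (by omega) (by omega) (by omega)

end Guarded

def Degraded (hk : 2 ≤ k) (g : QuaternionGroup k) (w : List (Fin (4 * k))) : Prop :=
  HasSeg hk g 0 1 (4 * k - 1) w ∧ ∃ f ℓ, 0 < ℓ ∧ Guarded hk (2 * k) f (4 * k - 1) 1 ℓ w

def Settled (hk : 2 ≤ k) (g : QuaternionGroup k) (w : List (Fin (4 * k))) : Prop :=
  HasSeg hk g 0 1 (4 * k) w ∨ Degraded hk g w

/-- The `n`-th letter of the pattern of `g` is the first letter of the pattern of `g * e(n)`. After a rewrite at the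
front destroys it, the rest of that pattern survives behind the new leading pattern, and a later
rewrite back to `g` restores `Degraded hk g` (`Anchored.degraded`). -/
def Anchored (hk : 2 ≤ k) (g g' : QuaternionGroup k) (w : List (Fin (4 * k))) : Prop :=
  HasSeg hk g' 0 1 (4 * k) w ∧ ∃ ℓ, Guarded hk (2 * k - 1) (g * qofpos k (4 * k)) (4 * k) 2 ℓ w

def Tracked (hk : 2 ≤ k) (g : QuaternionGroup k) (w : List (Fin (4 * k))) : Prop :=
  Degraded hk g w ∨ ∃ g', g' ≠ g ∧ Anchored hk g g' w

lemma degraded_of_stepAt (h : HasSeg hk g 0 1 (4 * k - 1) w)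
    (hs : StepAt hk (4 * k - 1) w w') : Degraded hk g w' := by
  obtain ⟨F', hF'⟩ := hs.exists_hasSeg_right
  exact ⟨h.stepAt_of_le hs (by omega), F', 4 * k, by omega, hF', .inl (by omega)⟩

lemma Degraded.stepAt_of_pos (h : Degraded hk g w) (hs : StepAt hk p w w') (hp : 0 < p) :
    Degraded hk g w' := by
  obtain ⟨hpre, f, ℓ, hℓ, hf⟩ := h
  obtain ⟨F, hF⟩ := hs.exists_hasSeg_left
  by_cases hp₁ : p + 2 ≤ 4 * k - 1
  · exact (false_of_pattern_starts_in_prefix hF hpre hp (by omega) (by omega) (by omega)).elim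
  by_cases hp₂ : p + 1 = 4 * k - 1
  · rw [← hp₂] at hf
    exact (hf.false_of_pattern_before hF).elim
  obtain rfl | hp₃ := eq_or_ne p (4 * k - 1)
  · exact degraded_of_stepAt hpre hs
  · exact ⟨hpre.stepAt_of_le hs (by omega), f, _, by omega, hf.stepAt hs (by omega)⟩

lemma Settled.stepAt_of_pos (h : Settled hk g w) (hs : StepAt hk p w w') (hp : 0 < p) :
    Settled hk g w' := by
  rcases h with hg | hd
  · obtain ⟨F, hF⟩ := hs.exists_hasSeg_left
    by_cases hp₁ : p + 2 ≤ 4 * k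
    · exact (false_of_pattern_starts_in_prefix hF hg hp (by omega) (by omega) le_rfl).elim
    obtain rfl | hp₂ := eq_or_ne p (4 * k - 1)
    · exact .inr (degraded_of_stepAt (hg.mono (by omega)) hs)
    · exact .inl (hg.stepAt_of_le hs (by omega))
  · exact .inr (hd.stepAt_of_pos hs hp)

lemma Settled.hasSeg (h : Settled hk g w) : HasSeg hk g 0 1 (4 * k - 1) w :=
  h.elim (·.mono (by omega)) (·.1)

lemma Settled.le_length (h : Settled hk g w) : 4 * k ≤ w.length := by
  rcases h with hg | ⟨-, f, ℓ, hℓ, hf, -⟩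
  · simpa using hg.add_le_length (by omega)
  · have := hf.add_le_length hℓ
    omega

lemma exists_settled_of_reflTransGen (h : ReflTransGen (Step hk) w w') (hne : w[0]? ≠ w'[0]?) :
    ∃ g, Settled hk g w := by
  induction h using Relation.ReflTransGen.head_induction_on with
  | refl => exact absurd rfl hne
  | head hs _ ih =>
    obtain ⟨p, hs⟩ := hs
    rcases Nat.eq_zero_or_pos p with rfl | hp
    · obtain ⟨F, hF⟩ := hs.exists_hasSeg_left
      exact ⟨F, .inl hF⟩
    · obtain ⟨g, hg⟩ := ih (by rwa [hs.getElem?_of_lt hp])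
      exact ⟨g, hg.stepAt_of_pos hs.symm hp⟩

lemma Anchored.degraded (h : Anchored hk g g w) : Degraded hk g w := by
  obtain ⟨hg, ℓ, hℓ⟩ := h
  have h₀ : w[4 * k - 1]? = some (qletter k hk (g * qofpos k (4 * k)) 1) := by
    have := hg (4 * k - 1) (by omega)
    rwa [zero_add, Nat.add_sub_cancel' (by omega), ← qletter_mul_qofpos_one] at this
  have hc := Guarded.cons (s := 4 * k - 1) (a := 1) h₀ (by rwa [Nat.sub_add_cancel (by omega)])
  rw [Nat.sub_add_cancel (by omega)] at hc
  exact ⟨hg.mono (by omega), _, ℓ + 1, by omega, hc⟩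

lemma Degraded.anchored_of_stepAt_zero (h : Degraded hk g w) (hs : StepAt hk 0 w w') :
    ∃ g', Anchored hk g g' w' := by
  obtain ⟨hpre, f, ℓ, hℓ, hf⟩ := h
  obtain ⟨F, hF⟩ := hs.exists_hasSeg_left
  obtain ⟨F', hF'⟩ := hs.exists_hasSeg_right
  have hFg : F = g := hF.eq_of_hasSeg hpre (by omega) (by omega)
  have hfg : f = g * qofpos k (4 * k) := by
    have := hf.1.mul_qofpos_eq hF (j := 0) (j' := 4 * k - 1) hℓ (by omega) (by omega)
    rwa [add_zero, qofpos_one (by omega), mul_one, Nat.add_sub_cancel' (by omega), hFg] at this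
  obtain ⟨ℓ, rfl⟩ : ∃ ℓ', ℓ = ℓ' + 1 := ⟨ℓ - 1, by omega⟩
  rw [← Nat.sub_add_cancel (by omega : 1 ≤ 2 * k), hfg] at hf
  have ht := hf.tail
  rw [Nat.sub_add_cancel (by omega)] at ht
  exact ⟨F', hF', ℓ, ht.stepAt_of_ge hs (by omega)⟩

lemma Anchored.stepAt_zero {g' : QuaternionGroup k} (h : Anchored hk g g' w)
    (hs : StepAt hk 0 w w') : ∃ g'', Anchored hk g g'' w' := by
  obtain ⟨F', hF'⟩ := hs.exists_hasSeg_right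
  obtain ⟨-, ℓ, hℓ⟩ := h
  exact ⟨F', hF', ℓ, hℓ.stepAt_of_ge hs (by omega)⟩

lemma Anchored.stepAt_of_pos {g' : QuaternionGroup k} (h : Anchored hk g g' w) (hg : g' ≠ g)
    (hs : StepAt hk p w w') (hp : 0 < p) : Anchored hk g g' w' := by
  obtain ⟨hg', ℓ, hℓ⟩ := h
  obtain ⟨F, hF⟩ := hs.exists_hasSeg_left
  by_cases hp₁ : p + 2 ≤ 4 * k
  · exact (false_of_pattern_starts_in_prefix hF hg' hp (by omega) (by omega) le_rfl).elim
  by_cases hp₂ : p = 4 * k - 1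
  · subst hp₂
    exfalso
    rcases Nat.eq_zero_or_pos ℓ with rfl | hℓ₀
    · obtain ⟨c, hc⟩ := (hℓ.2.resolve_left (by omega)).exists_hasSeg
      exact false_of_prefix_starts_in_pattern hF hc (by omega) (by omega) (by omega) (by omega)
    · -- the first letter of `F` forces `F = g' * e(n)`, its second letter `F = g * e(n)`
      have h₁ := hF.mul_qofpos_eq hg' (j := 0) (j' := 4 * k - 1) (by omega) (by omega) (by omega)
      rw [add_zero, qofpos_one (by omega), mul_one, Nat.add_sub_cancel' (by omega)]
        at h₁
      have h₂ := hF.mul_qofpos_eq hℓ.1 (j := 1) (j' := 0) (by omega) hℓ₀ (by omega)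
      exact hg (mul_right_cancel (h₁.symm.trans (mul_right_cancel h₂)))
  · exact ⟨hg'.stepAt_of_le hs (by omega), _, hℓ.stepAt hs (by omega)⟩

lemma Anchored.tracked {g' : QuaternionGroup k} (h : Anchored hk g g' w) : Tracked hk g w := by
  by_cases hg : g' = g
  · subst hg
    exact .inl h.degraded
  · exact .inr ⟨g', hg, h⟩

lemma Tracked.stepAt (h : Tracked hk g w) (hs : StepAt hk p w w') : Tracked hk g w' := by
  rcases h with hd | ⟨g', hg, ha⟩ <;> rcases Nat.eq_zero_or_pos p with rfl | hp
  · obtain ⟨g', ha'⟩ := hd.anchored_of_stepAt_zero hs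
    exact ha'.tracked
  · exact .inl (hd.stepAt_of_pos hs hp)
  · obtain ⟨g'', ha'⟩ := ha.stepAt_zero hs
    exact ha'.tracked
  · exact .inr ⟨g', hg, ha.stepAt_of_pos hg hs hp⟩

lemma Tracked.reflTransGen (h : Tracked hk g w) (hw : ReflTransGen (Step hk) w w') :
    Tracked hk g w' := by
  induction hw with
  | refl => exact h
  | tail _ hs ih =>
    obtain ⟨p, hs⟩ := hs
    exact ih.stepAt hs

theorem Settled.hasSeg_or_hasSeg {τ : QuaternionGroup k} (h : Settled hk g w)
    (hw : ReflTransGen (Step hk) w w') (hne : w[0]? ≠ w'[0]?) (hτ : HasSeg hk τ 0 1 (4 * k - 1) w') :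
    HasSeg hk g 0 1 (4 * k) w ∨ HasSeg hk τ 0 1 (4 * k) w' := by
  refine h.imp_right fun hd => ?_
  rcases Tracked.reflTransGen (.inl hd) hw with hd' | ⟨g', -, hg', -⟩
  · exact absurd (by simpa using (hd.1 0 (by omega)).trans (hd'.1 0 (by omega)).symm) hne
  · rwa [← hg'.eq_of_hasSeg hτ (by omega) (by omega)]

lemma Step.symm (h : Step hk w w') : Step hk w' w :=
  let ⟨p, hp⟩ := h
  ⟨p, hp.symm⟩

instance : Std.Symm (Step hk) := ⟨fun _ _ => Step.symm⟩

lemma Step.append_left (x : List (Fin (4 * k))) (h : Step hk w w') :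
    Step hk (x ++ w) (x ++ w') := by
  obtain ⟨p, f, f', u, v, rfl, rfl, rfl⟩ := h
  exact ⟨_, f, f', x ++ u, v, rfl, by simp, by simp⟩

lemma Step.append_right (y : List (Fin (4 * k))) (h : Step hk w w') :
    Step hk (w ++ y) (w' ++ y) := by
  obtain ⟨p, f, f', u, v, rfl, rfl, rfl⟩ := h
  exact ⟨_, f, f', u, v ++ y, rfl, by simp, by simp⟩

def stepCon (hk : 2 ≤ k) : Con (FreeMonoid (Fin (4 * k))) where
  r a b := ReflTransGen (Step hk) a.toList b.toList
  iseqv := ⟨fun _ => .refl, symm, .trans⟩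
  mul' {a b c d} hab hcd := by
    simp only [FreeMonoid.toList_mul]
    exact (hab.lift (· ++ c.toList) fun _ _ => Step.append_right _).trans
      (hcd.lift (b.toList ++ ·) fun _ _ => Step.append_left _)

lemma pattern_one : pattern hk 1 = (baseWord k).toList := by
  refine List.ext_getElem (by simp [baseWord]) fun i hi _ => Fin.ext ?_
  have hi : i < 4 * k := by simpa using hi
  have := qletter_val_add_one hk 1 (1 + i)
  rw [qact, one_mul, qpos_qofpos (by omega) (by omega)] at this
  simp [pattern, segWord, baseWord]
  omega

lemma qcon_le_stepCon : qcon k hk ≤ stepCon hk := by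
  refine Con.conGen_le.mpr ?_
  rintro _ _ ⟨rfl, g, rfl⟩
  exact .single ⟨0, 1, g, [], [], rfl, by simp [pattern_one], by simp [pattern]⟩

lemma hasSeg_ofFn_iff (I : ℕ → Fin (4 * k)) (g : QuaternionGroup k) {r : ℕ} (hℓ : ℓ ≤ r) :
    HasSeg hk g 0 1 ℓ (List.ofFn fun m : Fin r => I (m.val + 1)) ↔
      ∀ m, 1 ≤ m → m ≤ ℓ → (I m).val + 1 = qact k g m := by
  have key : ∀ j < r, (List.ofFn fun m : Fin r => I (m.val + 1))[j]? = some (I (j + 1)) := by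
    intro j hj
    simp [hj]
  constructor
  · intro h m hm hm'
    have := h (m - 1) (by omega)
    rw [zero_add, key _ (by omega), Option.some_inj, Nat.sub_add_cancel hm,
      Nat.add_sub_cancel' hm] at this
    rw [this, qletter_val_add_one]
  · intro h j hj
    rw [zero_add, key j (by omega), Option.some_inj, Fin.ext_iff, ← Nat.add_right_cancel_iff,
      qletter_val_add_one, h (j + 1) (by omega) (by omega), Nat.add_comm]

end QuaternionMonoid

open QuaternionMonoid Relation in
/-- if `π(x_{i_1} ⋯ x_{i_r}) = π(x_{j_1} ⋯ x_{j_r})` with `i_1 ≠ j_1`,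
then `r ≥ n`, the first `n - 1` letters of each word are prescribed by elements
`σ, τ ∈ H` (`i_m = σ(m)` and `j_m = τ(m)` for `1 ≤ m ≤ n - 1`), and exactly one of
(1) `σ(n) = i_n ∧ τ(n) = j_n`, (2) `σ(n) = i_n ∧ τ(n) ≠ j_n`,
(3) `σ(n) ≠ i_n ∧ τ(n) = j_n` holds. (The letter `x_{i_m}` is recorded `0`-indexed
as `I m : Fin (4 * k)`, so that `i_m = (I m).val + 1`.) -/
theorem stmt9 (k : ℕ) (hk : 2 ≤ k) (r : ℕ) (hr : 1 ≤ r) (I J : ℕ → Fin (4 * k))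
    (hπ : (qcon k hk).mk' (FreeMonoid.ofList (List.ofFn fun m : Fin r => I (m.val + 1)))
        = (qcon k hk).mk' (FreeMonoid.ofList (List.ofFn fun m : Fin r => J (m.val + 1))))
    (hne : I 1 ≠ J 1) :
    4 * k ≤ r ∧
    ∃ g h : QuaternionGroup k,
      (∀ m, 1 ≤ m → m ≤ 4 * k - 1 →
        ((I m).val + 1 = qact k g m ∧ (J m).val + 1 = qact k h m)) ∧
      ((qact k g (4 * k) = (I (4 * k)).val + 1 ∧ qact k h (4 * k) = (J (4 * k)).val + 1) ∨
       (qact k g (4 * k) = (I (4 * k)).val + 1 ∧ qact k h (4 * k) ≠ (J (4 * k)).val + 1) ∨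
       (qact k g (4 * k) ≠ (I (4 * k)).val + 1 ∧ qact k h (4 * k) = (J (4 * k)).val + 1)) := by
  have hw : ReflTransGen (Step hk) (List.ofFn fun m : Fin r => I (m.val + 1))
      (List.ofFn fun m : Fin r => J (m.val + 1)) :=
    qcon_le_stepCon ((Con.eq _).mp hπ)
  have hne₀ : (List.ofFn fun m : Fin r => I (m.val + 1))[0]? ≠
      (List.ofFn fun m : Fin r => J (m.val + 1))[0]? := by
    simpa [show 0 < r by omega] using hne
  obtain ⟨g, hg⟩ := exists_settled_of_reflTransGen hw hne₀
  obtain ⟨τ, hτ⟩ := exists_settled_of_reflTransGen (symm hw) hne₀.symm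
  have hr : 4 * k ≤ r := by simpa using hg.le_length
  have hI := (hasSeg_ofFn_iff I g (by omega)).mp hg.hasSeg
  have hJ := (hasSeg_ofFn_iff J τ (by omega)).mp hτ.hasSeg
  have := (hg.hasSeg_or_hasSeg hw hne₀ hτ.hasSeg).imp
    (fun h => ((hasSeg_ofFn_iff I g hr).mp h _ (by omega) le_rfl).symm)
    (fun h => ((hasSeg_ofFn_iff J τ hr).mp h _ (by omega) le_rfl).symm)
  refine ⟨hr, g, τ, fun m hm hm' => ⟨hI m hm hm', hJ m hm hm'⟩, ?_⟩
  tauto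
end
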